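/- Let (k_i)_{i≥1} be a sequence of positive integers satisfying condition (★), and let ξ ∈ (0,1). If (ξ,ξ,ξ) does not belong to the stable space W^s(0) mod 1, i.e., if there is no z ∈ ℤ³ such that the row vector ((ξ,ξ,ξ) − z)·A_{k_1}A_{k_2}⋯A_{k_n} tends to the zero vector as n → ∞, then e^{2πiξ} is not a continuous eigenvalue of the subshift (X,σ). -/

import Mathlib

open Filter Topology MeasureTheory

/-- The substitution `χ_k` on the alphabet `{1,2,3}`, coded as `Fin 3 = {0,1,2}`
(letter 1 ↦ 0, letter 2 ↦ 1, letter 3 ↦ 2):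
`χ_k(1) = 2`, `χ_k(2) = 3 1^k`, `χ_k(3) = 3 1^(k-1)`. -/
def chiSub (k : ℕ) : Fin 3 → List (Fin 3) :=
  ![[1], 2 :: List.replicate k 0, 2 :: List.replicate (k - 1) 0]

/-- Extension of `χ_k` to finite words by concatenation. -/
def applyChi (k : ℕ) (w : List (Fin 3)) : List (Fin 3) := w.flatMap (chiSub k)

/-- `compApply k n w = χ_{k 1} ∘ χ_{k 2} ∘ ⋯ ∘ χ_{k n} (w)`. -/
def compApply (k : ℕ → ℕ) : ℕ → List (Fin 3) → List (Fin 3)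
  | 0, w => w
  | n + 1, w => compApply k n (applyChi (k (n + 1)) w)

/-- Condition (★): k_{2i} > 1` for infinitely many `i` and `k_{2i-1} > 1`
for infinitely many `i`. -/
def StarCond (k : ℕ → ℕ) : Prop :=
  (∀ N, ∃ i ≥ N, 1 < k (2 * i)) ∧ (∀ N, ∃ i ≥ N, 1 < k (2 * i - 1))

/-- `w` is a prefix of the infinite sequence `x`. -/
def IsPrefixSeq (w : List (Fin 3)) (x : ℕ → Fin 3) : Prop :=
  w = List.ofFn fun i : Fin w.length => x i

/-- The left shift `σ`. -/
def shift (x : ℕ → Fin 3) : ℕ → Fin 3 := fun i => x (i + 1)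

/-- The closure of the `σ`-orbit of `ρ`: the subshift `X`. -/
def orbitClosure (ρ : ℕ → Fin 3) : Set (ℕ → Fin 3) :=
  closure {y | ∃ n : ℕ, y = fun i => ρ (i + n)}

/-- The matrix `A_k` with real entries, rows `(0,k,k-1)`, `(1,0,0)`, `(0,1,1)`. -/
noncomputable def Amat (k : ℕ) : Matrix (Fin 3) (Fin 3) ℝ :=
  !![0, (k : ℝ), (k : ℝ) - 1; 1, 0, 0; 0, 1, 1]

/-- `Aprod k n = A_{k_1} A_{k_2} ⋯ A_{k_n}`. -/
noncomputable def Aprod (k : ℕ → ℕ) (n : ℕ) : Matrix (Fin 3) (Fin 3) ℝ :=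
  ((List.range n).map fun i => Amat (k (i + 1))).prod

/-- `(ξ,ξ,ξ)` belongs to the stable space `W^s(0) mod 1`: for some integer vector `z`,
the row vectors `((ξ,ξ,ξ) − z) · A_{k_1} ⋯ A_{k_n}` tend to `0`. -/
def InStableMod1 (k : ℕ → ℕ) (ξ : ℝ) : Prop :=
  ∃ z : Fin 3 → ℤ,
    Tendsto (fun n => Matrix.vecMul (fun i => ξ - (z i : ℝ)) (Aprod k n)) atTop (nhds 0)

/-- `c` is a continuous eigenvalue of the subshift `X`: there is a continuous function
`f` on `X`, not identically zero on `X`, with `f ∘ σ = c·f` on `X`. -/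
def IsCtsEigenvalue (X : Set (ℕ → Fin 3)) (c : ℂ) : Prop :=
  ∃ f : (ℕ → Fin 3) → ℂ, ContinuousOn f X ∧ (∃ x ∈ X, f x ≠ 0) ∧
    ∀ x ∈ X, f (shift x) = c * f x

section Words
variable (k : ℕ → ℕ)

lemma applyChi_append (K : ℕ) (w₁ w₂ : List (Fin 3)) :
    applyChi K (w₁ ++ w₂) = applyChi K w₁ ++ applyChi K w₂ := by
  simp [applyChi]

lemma compApply_append (n : ℕ) (w₁ w₂ : List (Fin 3)) :
    compApply k n (w₁ ++ w₂) = compApply k n w₁ ++ compApply k n w₂ := by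
  induction n generalizing w₁ w₂ with
  | zero => rfl
  | succ n ih => simp only [compApply, applyChi_append, ih]

lemma compApply_cons (n : ℕ) (a : Fin 3) (w : List (Fin 3)) :
    compApply k n (a :: w) = compApply k n [a] ++ compApply k n w := by
  simpa using compApply_append k n [a] w

lemma compApply_single (n : ℕ) (b : Fin 3) :
    compApply k (n + 1) [b] = compApply k n (chiSub (k (n + 1)) b) := by
  simp only [compApply, applyChi, List.flatMap_cons, List.flatMap_nil, List.append_nil]

/-- lengths -/
noncomputable def lvec (n : ℕ) (a : Fin 3) : ℕ := (compApply k n [a]).length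

lemma length_compApply (n : ℕ) (w : List (Fin 3)) :
    (compApply k n w).length = (w.map fun a => lvec k n a).sum := by
  induction w with
  | nil =>
    have : compApply k n ([] : List (Fin 3)) = [] := by
      induction n with
      | zero => rfl
      | succ n ih => simp only [compApply, applyChi, List.flatMap_nil]; exact ih
    simp [this]
  | cons a w ih =>
    rw [compApply_cons, List.length_append, ih]
    simp [lvec]

lemma length_compApply_replicate (n m : ℕ) (a : Fin 3) :
    (compApply k n (List.replicate m a)).length = m * lvec k n a := by
  rw [length_compApply]
  simp [List.map_replicate, List.sum_replicate, smul_eq_mul]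

lemma chiSub_zero (K : ℕ) : chiSub K 0 = [1] := rfl
lemma chiSub_one (K : ℕ) : chiSub K 1 = 2 :: List.replicate K 0 := rfl
lemma chiSub_two (K : ℕ) : chiSub K 2 = 2 :: List.replicate (K - 1) 0 := rfl

lemma one_le_lvec (n : ℕ) (a : Fin 3) : 1 ≤ lvec k n a := by
  induction n generalizing a with
  | zero => simp [lvec, compApply]
  | succ n ih =>
    have h := compApply_single k n a
    have h1 := ih 1
    have h2 := ih 2
    simp only [lvec] at h1 h2
    have ha : a = 0 ∨ a = 1 ∨ a = 2 := by omega
    rcases ha with rfl | rfl | rfl <;>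
      · simp only [lvec, h, chiSub_zero, chiSub_one, chiSub_two]
        rw [length_compApply]
        simp only [List.map_cons, List.sum_cons, lvec, List.map_replicate, List.sum_replicate, smul_eq_mul, List.map_nil, List.sum_nil]
        omega
end Words
section Words2
variable (k : ℕ → ℕ)

lemma expand_zero (n : ℕ) : compApply k (n + 1) [0] = compApply k n [1] := by
  rw [compApply_single, chiSub_zero]

lemma expand_one (n : ℕ) :
    compApply k (n + 1) [1] = compApply k n [2] ++ compApply k n (List.replicate (k (n + 1)) 0) := by
  rw [compApply_single, chiSub_one, compApply_cons]

lemma expand_two (n : ℕ) :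
    compApply k (n + 1) [2] = compApply k n [2] ++ compApply k n (List.replicate (k (n + 1) - 1) 0) := by
  rw [compApply_single, chiSub_two, compApply_cons]

lemma lvec_zero_succ (n : ℕ) : lvec k (n + 1) 0 = lvec k n 1 := by
  simp [lvec, expand_zero]

lemma lvec_one_succ (n : ℕ) : lvec k (n + 1) 1 = lvec k n 2 + k (n + 1) * lvec k n 0 := by
  simp [lvec, expand_one, length_compApply_replicate]

lemma lvec_two_succ (n : ℕ) : lvec k (n + 1) 2 = lvec k n 2 + (k (n + 1) - 1) * lvec k n 0 := by
  simp [lvec, expand_two, length_compApply_replicate]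

lemma u_prefix_succ (n : ℕ) : compApply k n [2] <+: compApply k (n + 1) [2] := by
  rw [expand_two]; exact List.prefix_append _ _

lemma u_prefix_mono {m n : ℕ} (h : m ≤ n) : compApply k m [2] <+: compApply k n [2] := by
  induction n with
  | zero => simp_all
  | succ n ih =>
    rcases Nat.lt_or_ge m (n+1) with h' | h'
    · exact (ih (by omega)).trans (u_prefix_succ k n)
    · have : m = n + 1 := by omega
      subst this; exact List.prefix_refl _

lemma H_mono {m n : ℕ} (h : m ≤ n) : lvec k m 2 ≤ lvec k n 2 :=
  (u_prefix_mono k h).length_le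

/-- every level-(n+2) block starts with the level-n prefix word -/
lemma block_prefix (n : ℕ) (a : Fin 3) :
    compApply k n [2] <+: compApply k (n + 2) [a] := by
  have ha : a = 0 ∨ a = 1 ∨ a = 2 := by omega
  rcases ha with rfl | rfl | rfl
  · rw [expand_zero, expand_one]
    exact (u_prefix_mono k (by omega)).trans (List.prefix_append _ _)
  · rw [expand_one]
    exact (u_prefix_mono k (by omega)).trans (List.prefix_append _ _)
  · exact u_prefix_mono k (by omega)

variable (ρ : ℕ → Fin 3)

/-- the word `w` occurs in `ρ` at position `P` -/
def StartsAt (P : ℕ) (w : List (Fin 3)) : Prop :=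
  ∀ i (h : i < w.length), ρ (P + i) = w[i]

lemma startsAt_append_left {P : ℕ} {w₁ w₂ : List (Fin 3)}
    (h : StartsAt ρ P (w₁ ++ w₂)) : StartsAt ρ P w₁ := by
  intro i hi
  have := h i (by simp; omega)
  rwa [List.getElem_append_left hi] at this

lemma startsAt_append_right {P : ℕ} {w₁ w₂ : List (Fin 3)}
    (h : StartsAt ρ P (w₁ ++ w₂)) : StartsAt ρ (P + w₁.length) w₂ := by
  intro i hi
  have := h (w₁.length + i) (by simp; omega)
  rw [List.getElem_append_right (by omega)] at this
  simpa [Nat.add_assoc] using this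

lemma startsAt_prefix {P : ℕ} {v w : List (Fin 3)}
    (hvw : v <+: w) (h : StartsAt ρ P w) : StartsAt ρ P v := by
  intro i hi
  rw [hvw.getElem hi]
  exact h i (lt_of_lt_of_le hi hvw.length_le)

lemma startsAt_u (hρ : ∀ n : ℕ, IsPrefixSeq (compApply k n [2]) ρ) (n : ℕ) :
    StartsAt ρ 0 (compApply k n [2]) := by
  intro i hi
  have e := hρ n
  unfold IsPrefixSeq at e
  rw [List.getElem_of_eq e hi, List.getElem_ofFn]
  simp
end Words2
section Words3
variable (k : ℕ → ℕ)

lemma compApply_nil (n : ℕ) : compApply k n ([] : List (Fin 3)) = [] := by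
  induction n with
  | zero => rfl
  | succ n ih => simp only [compApply, applyChi, List.flatMap_nil]; exact ih

/-- `segApply k n j w = χ_{k (n+1)} ∘ ⋯ ∘ χ_{k (n+j)} (w)` -/
def segApply (n : ℕ) : ℕ → List (Fin 3) → List (Fin 3)
  | 0, w => w
  | j + 1, w => segApply n j (applyChi (k (n + j + 1)) w)

lemma compApply_segApply (n : ℕ) : ∀ (j : ℕ) (w : List (Fin 3)),
    compApply k (n + j) w = compApply k n (segApply k n j w)
  | 0, w => rfl
  | j + 1, w => by
    show compApply k (n + j) (applyChi (k (n + j + 1)) w) = _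
    rw [compApply_segApply n j (applyChi (k (n + j + 1)) w)]
    rfl

lemma segApply_shift (n : ℕ) : ∀ (j : ℕ) (w : List (Fin 3)),
    segApply k n (j + 1) w = applyChi (k (n + 1)) (segApply k (n + 1) j w)
  | 0, w => rfl
  | j + 1, w => by
    show segApply k n (j + 1) (applyChi (k (n + j + 1 + 1)) w) =
      applyChi (k (n + 1)) (segApply k (n + 1) j (applyChi (k (n + 1 + j + 1)) w))
    have e : n + 1 + j + 1 = n + j + 1 + 1 := by omega
    rw [e]
    exact segApply_shift n j _

lemma mem_applyChi_of_mem {K : ℕ} {a b : Fin 3} {w : List (Fin 3)}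
    (ha : a ∈ w) (hb : b ∈ chiSub K a) : b ∈ applyChi K w :=
  List.mem_flatMap.2 ⟨a, ha, hb⟩

lemma alt_mem (hpos : ∀ i, 1 ≤ i → 1 ≤ k i) :
    ∀ (j n : ℕ) (w : List (Fin 3)), (0 : Fin 3) ∈ w →
      (if Even j then (0 : Fin 3) else 1) ∈ segApply k n j w := by
  intro j
  induction j with
  | zero => intro n w hw; simpa [segApply] using hw
  | succ j ih =>
    intro n w hw
    rw [segApply_shift]
    have hin := ih (n + 1) w hw
    rcases Nat.even_or_odd j with hj | hj
    · simp only [hj, if_pos] at hin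
      have : ¬ Even (j + 1) := by simp [Nat.even_add_one, hj]
      rw [if_neg this]
      exact mem_applyChi_of_mem hin (by rw [chiSub_zero]; simp)
    · have hj' : ¬ Even j := Nat.not_even_iff_odd.2 hj
      simp only [hj', if_neg, if_false] at hin
      have : Even (j + 1) := Nat.even_add_one.2 hj'
      rw [if_pos this]
      refine mem_applyChi_of_mem hin ?_
      rw [chiSub_one]
      have : 1 ≤ k (n + 1) := hpos (n + 1) (by omega)
      simp only [List.mem_cons]
      right
      exact List.mem_replicate.2 ⟨by omega, rfl⟩

lemma star_exists (hstar : StarCond k) (n : ℕ) : ∃ j, n ≤ j ∧ 2 ≤ k (j + 1) := by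
  obtain ⟨i, hi, hk⟩ := hstar.1 (n + 1)
  exact ⟨2 * i - 1, by omega, by rw [show 2 * i - 1 + 1 = 2 * i from by omega]; omega⟩

lemma star_parity (hstar : StarCond k) (N : ℕ) : ∃ d, d % 2 = 1 ∧ 2 ≤ k (N + d + 1) := by
  rcases Nat.even_or_odd N with hN | hN
  · obtain ⟨t, ht⟩ := hN
    obtain ⟨i, hi, hk⟩ := hstar.1 (t + 1)
    have e : N + (2 * i - N - 1) + 1 = 2 * i := by omega
    exact ⟨2 * i - N - 1, by omega, by rw [e]; omega⟩
  · obtain ⟨t, ht⟩ := hN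
    obtain ⟨i, hi, hk⟩ := hstar.2 (t + 2)
    have e : N + (2 * i - 1 - N - 1) + 1 = 2 * i - 1 := by omega
    exact ⟨2 * i - 1 - N - 1, by omega, by rw [e]; omega⟩

/-- there is an occurrence of the letter `2` (code 1) in some `segApply` word -/
lemma exists_code1 (hpos : ∀ i, 1 ≤ i → 1 ≤ k i) (hstar : StarCond k) (N : ℕ) :
    ∃ j, 1 ≤ j ∧ (1 : Fin 3) ∈ segApply k N j [2] := by
  obtain ⟨d, hd, hk⟩ := star_parity k hstar N
  refine ⟨d + 1, by omega, ?_⟩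
  show (1 : Fin 3) ∈ segApply k N d (applyChi (k (N + d + 1)) [2])
  have h0 : (0 : Fin 3) ∈ applyChi (k (N + d + 1)) [2] := by
    refine mem_applyChi_of_mem (a := 2) (List.mem_singleton.2 rfl) ?_
    rw [chiSub_two]
    simp only [List.mem_cons]
    right
    exact List.mem_replicate.2 ⟨by omega, rfl⟩
  have := alt_mem k hpos d N _ h0
  rwa [if_neg (by rw [Nat.even_iff]; omega)] at this

lemma H_unbounded (hpos : ∀ i, 1 ≤ i → 1 ≤ k i) (hstar : StarCond k) (c : ℕ) :
    ∃ N, c ≤ lvec k N 2 := by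
  induction c with
  | zero => exact ⟨0, by omega⟩
  | succ c ih =>
    obtain ⟨N, hN⟩ := ih
    obtain ⟨j, hj, hk⟩ := star_exists k hstar N
    refine ⟨j + 1, ?_⟩
    rw [lvec_two_succ]
    have h1 := one_le_lvec k j 0
    have h2 := H_mono k hj
    have h3 : 1 ≤ k (j + 1) - 1 := by omega
    nlinarith

lemma H_tendsto (hpos : ∀ i, 1 ≤ i → 1 ≤ k i) (hstar : StarCond k) :
    Tendsto (fun n => lvec k n 2) atTop atTop := by
  rw [tendsto_atTop_atTop]
  intro b
  obtain ⟨N, hN⟩ := H_unbounded k hpos hstar b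
  exact ⟨N, fun n hn => le_trans hN (H_mono k hn)⟩
end Words3
section Occ
variable (k : ℕ → ℕ) (ρ : ℕ → Fin 3)

lemma lvec_eq_of_eq {m n : ℕ} (h : compApply k m [2] = compApply k n [2]) :
    lvec k m 2 = lvec k n 2 := by simp [lvec, h]

/-- agreement of `ρ` with itself after the prefix `u (n+2)` -/
lemma tail_agree (hpos : ∀ i, 1 ≤ i → 1 ≤ k i) (hstar : StarCond k)
    (hρ : ∀ n : ℕ, IsPrefixSeq (compApply k n [2]) ρ) (n : ℕ) :
    ∀ i < lvec k n 2, ρ (lvec k (n + 2) 2 + i) = ρ i := by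
  classical
  have hex : ∃ j, n + 2 ≤ j ∧ 2 ≤ k (j + 1) := star_exists k hstar (n + 2)
  set m := Nat.find hex with hmdef
  have hm := Nat.find_spec hex
  have hu : ∀ j, n + 2 ≤ j → j ≤ m → compApply k j [2] = compApply k (n + 2) [2] := by
    intro j hj1
    induction j, hj1 using Nat.le_induction with
    | base => intro _; rfl
    | succ j hj ih =>
      intro hjm
      have hlt : j < m := by omega
      have hnk : ¬(n + 2 ≤ j ∧ 2 ≤ k (j + 1)) := Nat.find_min hex hlt
      have hk1 : k (j + 1) = 1 := by
        have := hpos (j + 1) (by omega); omega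
      rw [expand_two, hk1]
      simp only [Nat.sub_self, List.replicate_zero, compApply_nil, List.append_nil]
      exact ih (by omega)
  have hum : compApply k m [2] = compApply k (n + 2) [2] := hu m hm.1 le_rfl
  have hK : 2 ≤ k (m + 1) := hm.2
  have hrep : List.replicate (k (m + 1) - 1) (0 : Fin 3)
      = 0 :: List.replicate (k (m + 1) - 2) 0 := by
    rw [show k (m + 1) - 1 = (k (m + 1) - 2) + 1 from by omega, List.replicate_succ]
  have hexp : compApply k (m + 1) [2] = compApply k m [2] ++
      (compApply k m [0] ++ compApply k m (List.replicate (k (m + 1) - 2) 0)) := by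
    rw [expand_two, hrep, compApply_cons k m 0 (List.replicate (k (m + 1) - 2) 0)]
  have hst : StartsAt ρ 0 (compApply k (m + 1) [2]) := startsAt_u k ρ hρ (m + 1)
  rw [hexp] at hst
  have hst3 := startsAt_append_left ρ (startsAt_append_right ρ hst)
  have hpre : compApply k n [2] <+: compApply k m [0] := by
    have h1 : compApply k (m - 2) [2] <+: compApply k ((m - 2) + 2) [0] := block_prefix k (m - 2) 0
    rw [show (m - 2) + 2 = m from by omega] at h1
    exact (u_prefix_mono k (show n ≤ m - 2 by omega)).trans h1
  have hst4 := startsAt_prefix ρ hpre hst3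
  intro i hi
  have h5 := hst4 i hi
  have h6 := startsAt_u k ρ hρ n i hi
  rw [Nat.zero_add] at h5 h6
  have hl : (compApply k m [2]).length = lvec k (n + 2) 2 := lvec_eq_of_eq k hum
  rw [hl] at h5
  rw [h5, h6]

/-- occurrences of `W n 0` in the run after the prefix `u n` -/
lemma run_agree (hρ : ∀ n : ℕ, IsPrefixSeq (compApply k n [2]) ρ)
    (n j : ℕ) (hj : j + 2 ≤ k (n + 1)) :
    StartsAt ρ (lvec k n 2 + j * lvec k n 0) (compApply k n [0]) := by
  have hrep : List.replicate (k (n + 1) - 1) (0 : Fin 3)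
      = List.replicate j 0 ++ (0 :: List.replicate (k (n + 1) - 2 - j) 0) := by
    rw [← List.replicate_succ, ← List.replicate_add]
    congr 1
    omega
  have hexp : compApply k (n + 1) [2] = compApply k n [2] ++
      (compApply k n (List.replicate j 0) ++
        (compApply k n [0] ++ compApply k n (List.replicate (k (n + 1) - 2 - j) 0))) := by
    rw [expand_two, hrep, compApply_append, compApply_cons k n 0 (List.replicate (k (n + 1) - 2 - j) 0)]
  have hst : StartsAt ρ 0 (compApply k (n + 1) [2]) := startsAt_u k ρ hρ (n + 1)
  rw [hexp] at hst
  have hst3 := startsAt_append_left ρ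
    (startsAt_append_right ρ (startsAt_append_right ρ hst))
  have hpos2 : 0 + (compApply k n [2]).length + (compApply k n (List.replicate j 0)).length
      = lvec k n 2 + j * lvec k n 0 := by
    rw [length_compApply_replicate]
    simp [lvec]
  rwa [hpos2] at hst3

/-- occurrence pair at distance `lvec k (n+2) 1` -/
lemma occ_one (hpos : ∀ i, 1 ≤ i → 1 ≤ k i) (hstar : StarCond k)
    (hρ : ∀ n : ℕ, IsPrefixSeq (compApply k n [2]) ρ) (n : ℕ) : ∃ P,
    (∀ i < lvec k n 2, ρ (P + i) = ρ i) ∧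
    (∀ i < lvec k n 2, ρ (P + lvec k (n + 2) 1 + i) = ρ i) := by
  obtain ⟨j, hj1, hj⟩ := exists_code1 k hpos hstar (n + 2)
  obtain ⟨x, y, hxy⟩ := List.append_of_mem hj
  have hum : compApply k (n + 2 + j) [2] = compApply k (n + 2) x ++
      (compApply k (n + 2) [1] ++ compApply k (n + 2) y) := by
    rw [compApply_segApply k (n + 2) j [2], hxy, compApply_append, compApply_cons k (n + 2) 1 y]
  set m := n + 2 + j with hmdef
  set P := (compApply k (n + 2) x).length with hPdef
  have hst : StartsAt ρ 0 (compApply k m [2]) := startsAt_u k ρ hρ m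
  rw [hum] at hst
  have hst1 := startsAt_append_left ρ (startsAt_append_right ρ hst)
  refine ⟨P, ?_, ?_⟩
  · have hpre : compApply k n [2] <+: compApply k (n + 2) [1] := block_prefix k n 1
    have hst2 := startsAt_prefix ρ hpre hst1
    intro i hi
    have h5 := hst2 i hi
    have h6 := startsAt_u k ρ hρ n i hi
    rw [Nat.zero_add] at h5 h6
    rw [h5, h6]
  · cases y with
    | nil =>
      have hlen : lvec k m 2 = P + lvec k (n + 2) 1 := by
        simp [lvec, hum, compApply_nil, hPdef]
      have ht := tail_agree k ρ hpos hstar hρ (m - 2)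
      rw [show m - 2 + 2 = m from by omega] at ht
      intro i hi
      have him : i < lvec k (m - 2) 2 :=
        lt_of_lt_of_le hi (H_mono k (show n ≤ m - 2 by omega))
      have := ht i him
      rwa [hlen] at this
    | cons b y' =>
      have hst2 := startsAt_append_right ρ (startsAt_append_right ρ hst)
      rw [compApply_cons k (n + 2) b y'] at hst2
      have hst3 := startsAt_append_left ρ hst2
      have hpre : compApply k n [2] <+: compApply k (n + 2) [b] := block_prefix k n b
      have hst4 := startsAt_prefix ρ hpre hst3
      intro i hi
      have h5 := hst4 i hi
      have h6 := startsAt_u k ρ hρ n i hi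
      rw [Nat.zero_add] at h5 h6
      have : (compApply k (n + 2) [1]).length = lvec k (n + 2) 1 := rfl
      rw [this] at h5
      rw [h5, h6]
end Occ
section Analytic

noncomputable def cEig (ξ : ℝ) : ℂ := Complex.exp (2 * Real.pi * Complex.I * (ξ : ℂ))

lemma abs_cEig (ξ : ℝ) : ‖cEig ξ‖ = 1 := by
  rw [cEig, Complex.norm_exp]
  have : (2 * (Real.pi : ℂ) * Complex.I * (ξ : ℂ)).re = 0 := by
    simp [Complex.mul_re, Complex.mul_im]
  rw [this, Real.exp_zero]

variable (ρ : ℕ → Fin 3) (ξ : ℝ) (f : (ℕ → Fin 3) → ℂ)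

def orbPt (t : ℕ) : ℕ → Fin 3 := fun i => ρ (i + t)

lemma orbPt_mem (t : ℕ) : orbPt ρ t ∈ orbitClosure ρ := subset_closure ⟨t, rfl⟩

lemma orbPt_zero : orbPt ρ 0 = ρ := funext fun i => congrArg ρ (Nat.add_zero i)

lemma shift_orbPt (t : ℕ) : shift (orbPt ρ t) = orbPt ρ (t + 1) :=
  funext fun i => congrArg ρ (by omega)

lemma f_orbPt (heig : ∀ x ∈ orbitClosure ρ, f (shift x) = cEig ξ * f x) (t : ℕ) :
    f (orbPt ρ t) = cEig ξ ^ t * f ρ := by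
  induction t with
  | zero => simp [orbPt_zero]
  | succ t ih =>
    rw [← shift_orbPt, heig _ (orbPt_mem ρ t), ih, pow_succ]
    ring

lemma f_rho_ne (hf : ContinuousOn f (orbitClosure ρ))
    (hx : ∃ x ∈ orbitClosure ρ, f x ≠ 0)
    (heig : ∀ x ∈ orbitClosure ρ, f (shift x) = cEig ξ * f x) : f ρ ≠ 0 := by
  obtain ⟨x₀, hx₀X, hx₀⟩ := hx
  intro h0
  apply hx₀
  have horb : ∀ y ∈ {y : ℕ → Fin 3 | ∃ n : ℕ, y = fun i => ρ (i + n)}, f y = 0 := by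
    rintro y ⟨t, rfl⟩
    have : (fun i => ρ (i + t)) = orbPt ρ t := rfl
    rw [this, f_orbPt ρ ξ f heig, h0, mul_zero]
  obtain ⟨g, hg, hgl⟩ := mem_closure_iff_seq_limit.1 hx₀X
  have hgX : ∀ j, g j ∈ orbitClosure ρ := fun j => subset_closure (hg j)
  have h1 : Tendsto (fun j => f (g j)) atTop (𝓝 (f x₀)) :=
    (hf.continuousWithinAt hx₀X).tendsto.comp
      (tendsto_nhdsWithin_of_tendsto_nhds_of_eventually_within _ hgl
        (Filter.Eventually.of_forall hgX))
  have h2 : (fun j => f (g j)) = fun _ => (0 : ℂ) := funext fun j => horb _ (hg j)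
  rw [h2] at h1
  exact tendsto_nhds_unique h1 tendsto_const_nhds

/-- main analytic lemma: two shifted copies of ρ agreeing on longer and longer
prefixes force the eigenvalue powers to agree in the limit -/
lemma lemA (hf : ContinuousOn f (orbitClosure ρ))
    (hx : ∃ x ∈ orbitClosure ρ, f x ≠ 0)
    (heig : ∀ x ∈ orbitClosure ρ, f (shift x) = cEig ξ * f x)
    (P Q mm : ℕ → ℕ)
    (hagree : ∀ n, ∀ i < mm n, ρ (P n + i) = ρ (Q n + i))
    (hm : Tendsto mm atTop atTop) :
    Tendsto (fun n => cEig ξ ^ P n - cEig ξ ^ Q n) atTop (𝓝 0) := by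
  have hfρ : f ρ ≠ 0 := f_rho_ne ρ ξ f hf hx heig
  have hXc : IsCompact (orbitClosure ρ) := (isClosed_closure).isCompact
  have key : Tendsto (fun n => f (orbPt ρ (P n)) - f (orbPt ρ (Q n))) atTop (𝓝 0) := by
    apply Filter.tendsto_of_subseq_tendsto
    intro ns hns
    obtain ⟨w, hwX, φ, hφ, hconv⟩ :=
      hXc.tendsto_subseq (x := fun j => orbPt ρ (P (ns j))) (fun j => orbPt_mem ρ _)
    refine ⟨φ, ?_⟩
    have hmm : Tendsto (fun j => mm (ns (φ j))) atTop atTop :=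
      hm.comp (hns.comp hφ.tendsto_atTop)
    have hconv2 : Tendsto (fun j => orbPt ρ (Q (ns (φ j)))) atTop (𝓝 w) := by
      rw [tendsto_pi_nhds] at hconv ⊢
      intro i0
      have h1 := hconv i0
      rw [nhds_discrete, tendsto_pure] at h1 ⊢
      filter_upwards [h1, hmm.eventually_ge_atTop (i0 + 1)] with j hj1 hj2
      have := hagree (ns (φ j)) i0 (by omega)
      show ρ (i0 + Q (ns (φ j))) = w i0
      rw [Nat.add_comm i0, ← this, Nat.add_comm, hj1.symm]
      rfl
    have hcwa := (hf.continuousWithinAt hwX).tendsto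
    have t1 : Tendsto (fun j => f (orbPt ρ (P (ns (φ j))))) atTop (𝓝 (f w)) :=
      hcwa.comp (tendsto_nhdsWithin_of_tendsto_nhds_of_eventually_within _ hconv
        (Filter.Eventually.of_forall fun j => orbPt_mem ρ _))
    have t2 : Tendsto (fun j => f (orbPt ρ (Q (ns (φ j))))) atTop (𝓝 (f w)) :=
      hcwa.comp (tendsto_nhdsWithin_of_tendsto_nhds_of_eventually_within _ hconv2
        (Filter.Eventually.of_forall fun j => orbPt_mem ρ _))
    simpa using t1.sub t2
  have hrepr : ∀ n, cEig ξ ^ P n - cEig ξ ^ Q n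
      = (f (orbPt ρ (P n)) - f (orbPt ρ (Q n))) * (f ρ)⁻¹ := by
    intro n
    rw [f_orbPt ρ ξ f heig, f_orbPt ρ ξ f heig, ← sub_mul, mul_assoc,
      mul_inv_cancel₀ hfρ, mul_one]
  have := key.mul_const ((f ρ)⁻¹)
  rw [zero_mul] at this
  exact this.congr fun n => (hrepr n).symm

/-- distance of `ξ * d n` to the integers tends to `0` -/
lemma lemB (hf : ContinuousOn f (orbitClosure ρ))
    (hx : ∃ x ∈ orbitClosure ρ, f x ≠ 0)
    (heig : ∀ x ∈ orbitClosure ρ, f (shift x) = cEig ξ * f x)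
    (Q d mm : ℕ → ℕ)
    (hagree : ∀ n, ∀ i < mm n, ρ (Q n + d n + i) = ρ (Q n + i))
    (hm : Tendsto mm atTop atTop) :
    Tendsto (fun n => ξ * d n - round (ξ * d n)) atTop (𝓝 0) := by
  set c := cEig ξ with hc
  have step1 : Tendsto (fun n => c ^ (Q n + d n) - c ^ Q n) atTop (𝓝 0) :=
    lemA ρ ξ f hf hx heig _ _ mm hagree hm
  have habs : ∀ t : ℕ, ‖c ^ t‖ = 1 := by
    intro t; rw [norm_pow, abs_cEig, one_pow]
  have step2 : Tendsto (fun n => c ^ d n - 1) atTop (𝓝 0) := by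
    rw [tendsto_zero_iff_norm_tendsto_zero] at step1 ⊢
    refine step1.congr fun n => ?_
    rw [pow_add]
    calc ‖c ^ Q n * c ^ d n - c ^ Q n‖ = ‖c ^ Q n * (c ^ d n - 1)‖ := by ring_nf
      _ = ‖c ^ Q n‖ * ‖c ^ d n - 1‖ := norm_mul _ _
      _ = ‖c ^ d n - 1‖ := by
          rw [show ‖c ^ Q n‖ = 1 from habs (Q n), one_mul]
  have step2' : Tendsto (fun n => c ^ d n) atTop (𝓝 1) := by
    have := step2.add_const (1 : ℂ)
    simpa using this
  set e := fun n => ξ * d n - round (ξ * d n) with he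
  have hrep : ∀ n, c ^ d n = Complex.exp ((e n : ℂ) * (2 * Real.pi * Complex.I)) := by
    intro n
    rw [hc, cEig, ← Complex.exp_nat_mul]
    rw [show ((d n : ℂ)) * (2 * (Real.pi : ℂ) * Complex.I * (ξ : ℂ))
        = ((e n : ℂ) * (2 * Real.pi * Complex.I))
          + ((round (ξ * d n) : ℤ) : ℂ) * (2 * Real.pi * Complex.I) from by
      rw [he]; push_cast; ring]
    rw [Complex.exp_add, Complex.exp_int_mul_two_pi_mul_I, mul_one]
  have hbd : ∀ n, e n ∈ Set.Icc (-(1/2) : ℝ) (1/2) := by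
    intro n
    have := abs_sub_round (ξ * d n)
    rw [Set.mem_Icc]
    constructor <;> [linarith [abs_le.1 this]; linarith [abs_le.1 this]]
  apply Filter.tendsto_of_subseq_tendsto
  intro ns hns
  obtain ⟨l, hl, φ, hφ, hconv⟩ :=
    (isCompact_Icc (a := (-(1/2):ℝ)) (b := 1/2)).tendsto_subseq
      (x := fun j => e (ns j)) (fun j => hbd (ns j))
  refine ⟨φ, ?_⟩
  have hexp : Tendsto (fun j => Complex.exp ((e (ns (φ j)) : ℂ) * (2 * Real.pi * Complex.I)))
      atTop (𝓝 (Complex.exp ((l : ℂ) * (2 * Real.pi * Complex.I)))) := by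
    apply (Complex.continuous_exp.tendsto _).comp
    exact ((Complex.continuous_ofReal.tendsto _).comp hconv).mul_const _
  have hexp2 : Tendsto (fun j => c ^ d (ns (φ j))) atTop (𝓝 1) :=
    step2'.comp ((hns.comp hφ.tendsto_atTop))
  have hexp3 : Tendsto (fun j => c ^ d (ns (φ j))) atTop
      (𝓝 (Complex.exp ((l : ℂ) * (2 * Real.pi * Complex.I)))) := by
    refine hexp.congr fun j => (hrep _).symm
  have h1 : Complex.exp ((l : ℂ) * (2 * Real.pi * Complex.I)) = 1 :=
    tendsto_nhds_unique hexp3 hexp2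
  obtain ⟨z, hz⟩ := Complex.exp_eq_one_iff.1 h1
  have hlz : (l : ℂ) = (z : ℂ) := by
    have h2π : (2 * (Real.pi : ℂ) * Complex.I) ≠ 0 := by
      simp [Real.pi_ne_zero, Complex.I_ne_zero]
    exact mul_right_cancel₀ h2π hz
  have hlz' : l = (z : ℝ) := by exact_mod_cast hlz
  have hz0 : z = 0 := by
    by_contra hzne
    have h1z : (1 : ℝ) ≤ |(z : ℝ)| := by
      have : (1 : ℤ) ≤ |z| := Int.one_le_abs (by omega)
      exact_mod_cast this
    rw [← hlz'] at h1z
    rcases Set.mem_Icc.1 hl with ⟨ha, hb⟩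
    have : |l| ≤ 1/2 := abs_le.2 ⟨ha, hb⟩
    linarith
  rw [hlz', hz0] at hconv
  simpa [Function.comp_def] using hconv
end Analytic
section Eps
variable (k : ℕ → ℕ) (ρ : ℕ → Fin 3) (ξ : ℝ) (f : (ℕ → Fin 3) → ℂ)

/-- `ε_n(b) = ξ ℓ_n(b) - nearest integer` -/
noncomputable def epsv (n : ℕ) (b : Fin 3) : ℝ :=
  ξ * (lvec k n b : ℝ) - (round (ξ * (lvec k n b : ℝ)) : ℤ)

variable (hpos : ∀ i, 1 ≤ i → 1 ≤ k i) (hstar : StarCond k)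
  (hρ : ∀ n : ℕ, IsPrefixSeq (compApply k n [2]) ρ)
  (hf : ContinuousOn f (orbitClosure ρ))
  (hx : ∃ x ∈ orbitClosure ρ, f x ≠ 0)
  (heig : ∀ x ∈ orbitClosure ρ, f (shift x) = cEig ξ * f x)

include hpos hstar hρ hf hx heig

lemma eps_two : Tendsto (fun n => epsv k ξ n 2) atTop (𝓝 0) := by
  have hd : Tendsto (fun n => ξ * ((if 2 ≤ n then lvec k n 2 else 0 : ℕ) : ℝ)
      - (round (ξ * ((if 2 ≤ n then lvec k n 2 else 0 : ℕ) : ℝ)) : ℤ)) atTop (𝓝 0) := by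
    apply lemB ρ ξ f hf hx heig (fun _ => 0)
      (fun n => if 2 ≤ n then lvec k n 2 else 0)
      (fun n => if 2 ≤ n then lvec k (n - 2) 2 else n)
    · intro n i hi
      by_cases hn : 2 ≤ n
      · rw [if_pos hn] at hi ⊢
        have := tail_agree k ρ hpos hstar hρ (n - 2)
        rw [show n - 2 + 2 = n from by omega] at this
        rw [Nat.zero_add, Nat.zero_add]
        exact this i hi
      · rw [if_neg hn]
    · rw [tendsto_atTop_atTop]
      intro b
      obtain ⟨N, hN⟩ := tendsto_atTop_atTop.1 (H_tendsto k hpos hstar) b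
      refine ⟨N + b + 2, fun n hn => ?_⟩
      rw [if_pos (by omega)]
      exact hN (n - 2) (by omega)
  refine hd.congr' ?_
  filter_upwards [eventually_ge_atTop 2] with n hn
  rw [if_pos hn]
  rfl

lemma eps_one : Tendsto (fun n => epsv k ξ n 1) atTop (𝓝 0) := by
  have key : Tendsto (fun n => epsv k ξ (n + 2) 1) atTop (𝓝 0) := by
    have hocc := fun n => occ_one k ρ hpos hstar hρ n
    choose P hP1 hP2 using hocc
    apply lemB ρ ξ f hf hx heig P (fun n => lvec k (n + 2) 1) (fun n => lvec k n 2)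
    · intro n i hi
      rw [hP2 n i hi, hP1 n i hi]
    · exact H_tendsto k hpos hstar
  exact (tendsto_add_atTop_iff_nat 2).1 key

lemma eps_zero : Tendsto (fun n => epsv k ξ n 0) atTop (𝓝 0) := by
  have key : Tendsto (fun n => epsv k ξ (n + 1) 0) atTop (𝓝 0) := by
    have : (fun n => epsv k ξ (n + 1) 0) = fun n => epsv k ξ n 1 := by
      funext n
      simp only [epsv, lvec_zero_succ]
    rw [this]
    exact eps_one k ρ ξ f hpos hstar hρ hf hx heig
  exact (tendsto_add_atTop_iff_nat 1).1 key

lemma eps_kmul : Tendsto (fun n => (k (n + 1) : ℝ) * epsv k ξ n 0) atTop (𝓝 0) := by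
  classical
  -- value function
  set val : ℕ → ℕ → ℝ := fun n j =>
    |ξ * ((j * lvec k n 0 : ℕ) : ℝ) - (round (ξ * ((j * lvec k n 0 : ℕ) : ℝ)) : ℤ)| with hval
  -- choose the argmax over Finset.Icc 1 (k (n+1) - 2) when 3 ≤ k (n+1)
  have hsel : ∀ n, ∃ j, (3 ≤ k (n + 1) →
      (j ∈ Finset.Icc 1 (k (n + 1) - 2) ∧
        ∀ j' ∈ Finset.Icc 1 (k (n + 1) - 2), val n j' ≤ val n j)) ∧
      (¬ 3 ≤ k (n + 1) → j = 0) := by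
    intro n
    by_cases h3 : 3 ≤ k (n + 1)
    · have hne : (Finset.Icc 1 (k (n + 1) - 2)).Nonempty := ⟨1, by simp; omega⟩
      obtain ⟨j, hj, hmax⟩ := Finset.exists_max_image _ (val n) hne
      exact ⟨j, fun _ => ⟨hj, hmax⟩, fun h => absurd h3 h⟩
    · exact ⟨0, fun h => absurd h h3, fun _ => rfl⟩
  choose J hJ using hsel
  -- the distance to ℤ at the argmax tends to 0
  have hΔ : Tendsto (fun n => ξ * ((J n * lvec k n 0 : ℕ) : ℝ)
      - (round (ξ * ((J n * lvec k n 0 : ℕ) : ℝ)) : ℤ)) atTop (𝓝 0) := by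
    apply lemB ρ ξ f hf hx heig (fun n => lvec k n 2)
      (fun n => J n * lvec k n 0) (fun n => lvec k n 0)
    · intro n i hi
      by_cases h3 : 3 ≤ k (n + 1)
      · obtain ⟨hmem, _⟩ := (hJ n).1 h3
        rw [Finset.mem_Icc] at hmem
        have hs1 := run_agree k ρ hρ n (J n) (by omega) i hi
        have hs0 := run_agree k ρ hρ n 0 (by omega) i hi
        rw [Nat.zero_mul, Nat.add_zero] at hs0
        rw [hs1, hs0]
      · rw [(hJ n).2 h3, Nat.zero_mul, Nat.add_zero]
    · -- lvec k n 0 → ∞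
      have h2 : Tendsto (fun n => lvec k (n + 2) 0) atTop atTop := by
        apply tendsto_atTop_mono _ (H_tendsto k hpos hstar)
        intro n
        rw [lvec_zero_succ, lvec_one_succ]
        omega
      exact (tendsto_add_atTop_iff_nat 2).1 h2
  have hΔabs : Tendsto (fun n => val n (J n)) atTop (𝓝 0) := by
    have := hΔ.abs
    simpa [hval] using this
  have heps0 := eps_zero k ρ ξ f hpos hstar hρ hf hx heig
  rw [NormedAddCommGroup.tendsto_nhds_zero] at hΔabs heps0 ⊢
  intro ε hε
  have hε' : 0 < min (ε / 3) (1 / 5) := by positivity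
  filter_upwards [hΔabs (min (ε / 3) (1 / 5)) hε', heps0 (min (ε / 3) (1 / 5)) hε']
    with n h1 h2
  set a := epsv k ξ n 0 with ha
  set z0 := round (ξ * (lvec k n 0 : ℝ)) with hz0
  have haz : ξ * (lvec k n 0 : ℝ) = a + (z0 : ℝ) := by rw [ha, epsv]; ring
  rw [Real.norm_eq_abs] at h1 h2 ⊢
  rw [abs_abs] at h1
  by_cases h3 : 3 ≤ k (n + 1)
  · -- the stepping argument
    obtain ⟨hmem, hmax⟩ := (hJ n).1 h3
    rw [Finset.mem_Icc] at hmem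
    set δ := max (val n (J n)) |a| with hδ
    have hδε : δ < min (ε / 3) (1 / 5) := by
      rw [hδ]; exact max_lt h1 h2
    have hδ5 : δ < 1 / 5 := lt_of_lt_of_le hδε (min_le_right _ _)
    have hδa : |a| ≤ δ := le_max_right _ _
    have claim : ∀ j, j ≤ k (n + 1) - 2 → |(j : ℝ) * a| ≤ δ := by
      intro j
      induction j with
      | zero => intro _; simpa using le_trans (abs_nonneg a) hδa
      | succ j ih =>
        intro hj
        have hprev : |(j : ℝ) * a| ≤ δ := ih (by omega)
        have hlt : |((j : ℕ) + 1 : ℝ) * a| < 1 / 2 := by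
          have : ((j : ℕ) + 1 : ℝ) * a = (j : ℝ) * a + a := by ring
          rw [this]
          calc |(j : ℝ) * a + a| ≤ |(j : ℝ) * a| + |a| := abs_add_le _ _
            _ ≤ δ + δ := add_le_add hprev hδa
            _ < 1 / 2 := by linarith
        -- round of ξ * ((j+1) * lvec) is (j+1) * z0
        have hxval : ξ * (((j + 1) * lvec k n 0 : ℕ) : ℝ)
            = ((j : ℝ) + 1) * a + ((((j : ℤ) + 1) * z0 : ℤ) : ℝ) := by
          push_cast
          rw [mul_left_comm, haz]; ring
        have hround : round (ξ * (((j + 1) * lvec k n 0 : ℕ) : ℝ)) = ((j : ℤ) + 1) * z0 := by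
          rw [hxval, round_add_intCast]
          have h0 : round (((j : ℝ) + 1) * a) = 0 := by
            rw [round_eq_zero_iff]
            constructor
            · have := abs_le.1 hlt.le
              push_cast at this ⊢
              linarith [this.1]
            · have := abs_lt.1 hlt
              push_cast at this ⊢
              linarith [this.2]
          push_cast at h0 ⊢
          rw [h0, zero_add]
        have hvaleq : val n (j + 1) = |((j : ℝ) + 1) * a| := by
          simp only [hval]
          rw [hround, hxval]
          push_cast
          ring_nf
        have hjmem : j + 1 ∈ Finset.Icc 1 (k (n + 1) - 2) := by
          rw [Finset.mem_Icc]; omega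
        have hfin2 := hmax (j + 1) hjmem
        rw [hvaleq] at hfin2
        push_cast
        exact le_trans hfin2 (le_max_left _ _)
    have hK2 : |((k (n + 1) - 2 : ℕ) : ℝ) * a| ≤ δ := claim _ le_rfl
    have hfin : |(k (n + 1) : ℝ) * a| ≤ 3 * δ := by
      have hcast : ((k (n + 1) : ℕ) : ℝ) = ((k (n + 1) - 2 : ℕ) : ℝ) + 2 := by
        push_cast [Nat.cast_sub (by omega : 2 ≤ k (n + 1))]
        ring
      rw [hcast]
      calc |(((k (n + 1) - 2 : ℕ) : ℝ) + 2) * a|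
          = |((k (n + 1) - 2 : ℕ) : ℝ) * a + 2 * a| := by ring_nf
        _ ≤ |((k (n + 1) - 2 : ℕ) : ℝ) * a| + |2 * a| := abs_add_le _ _
        _ ≤ δ + 2 * |a| := by
            have h2a : |2 * a| = 2 * |a| := by rw [abs_mul, abs_two]
            rw [h2a]
            exact add_le_add hK2 le_rfl
        _ ≤ 3 * δ := by linarith
    calc |(k (n + 1) : ℝ) * a| ≤ 3 * δ := hfin
      _ < 3 * min (ε / 3) (1 / 5) := by linarith
      _ ≤ 3 * (ε / 3) := by
          have := min_le_left (ε / 3) (1 / 5)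
          linarith
      _ = ε := by ring
  · -- small K
    have hK : (k (n + 1) : ℝ) ≤ 2 := by
      have : k (n + 1) ≤ 2 := by omega
      exact_mod_cast this
    have hKnn : (0 : ℝ) ≤ (k (n + 1) : ℝ) := Nat.cast_nonneg _
    rw [abs_mul]
    have h2' : |a| < min (ε / 3) (1 / 5) := h2
    have habs : |(k (n + 1) : ℝ)| ≤ 2 := by rwa [abs_of_nonneg hKnn]
    calc |(k (n + 1) : ℝ)| * |a| ≤ 2 * |a| :=
        mul_le_mul_of_nonneg_right habs (abs_nonneg a)
      _ < 2 * min (ε / 3) (1 / 5) := by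
          have := abs_nonneg a
          nlinarith
      _ ≤ 2 * (ε / 3) := by
          have := min_le_left (ε / 3) (1 / 5)
          linarith
      _ ≤ ε := by linarith
end Eps
section Endgame
variable (k : ℕ → ℕ) (ξ : ℝ)

def Bmat (K : ℕ) : Matrix (Fin 3) (Fin 3) ℤ :=
  !![0, (K : ℤ), (K : ℤ) - 1; 1, 0, 0; 0, 1, 1]

def Bprod (n : ℕ) : Matrix (Fin 3) (Fin 3) ℤ :=
  ((List.range n).map fun i => Bmat (k (i + 1))).prod

lemma Bprod_zero : Bprod k 0 = 1 := by simp [Bprod]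

lemma Bprod_succ (n : ℕ) : Bprod k (n + 1) = Bprod k n * Bmat (k (n + 1)) := by
  simp [Bprod, List.range_succ]

lemma Aprod_zero : Aprod k 0 = 1 := by simp [Aprod]

lemma Aprod_succ (n : ℕ) : Aprod k (n + 1) = Aprod k n * Amat (k (n + 1)) := by
  simp [Aprod, List.range_succ]

lemma det_Bmat (K : ℕ) : (Bmat K).det = -1 := by
  simp [Bmat, Matrix.det_fin_three]
  ring

lemma isUnit_det_Bprod (n : ℕ) : IsUnit (Bprod k n).det := by
  induction n with
  | zero => rw [Bprod_zero, Matrix.det_one]; exact isUnit_one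
  | succ n ih =>
    rw [Bprod_succ, Matrix.det_mul, det_Bmat]
    exact ih.mul (Int.isUnit_iff.2 (Or.inr rfl))

lemma Amat_eq_map (K : ℕ) : Amat K = (Bmat K).map (fun z : ℤ => (z : ℝ)) := by
  ext i j
  rw [Matrix.map_apply]
  have hi : i = 0 ∨ i = 1 ∨ i = 2 := by omega
  have hj : j = 0 ∨ j = 1 ∨ j = 2 := by omega
  rcases hi with rfl | rfl | rfl <;> rcases hj with rfl | rfl | rfl <;>
    simp [Amat, Bmat]

lemma Aprod_eq_map (n : ℕ) : Aprod k n = (Bprod k n).map (fun z : ℤ => (z : ℝ)) := by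
  induction n with
  | zero =>
    rw [Aprod_zero, Bprod_zero]
    ext i j
    by_cases h : i = j <;> simp [Matrix.map_apply, Matrix.one_apply, h]
  | succ n ih =>
    rw [Aprod_succ, Bprod_succ, ih, Amat_eq_map]
    rw [show (fun z : ℤ => (z : ℝ)) = ⇑(Int.castRingHom ℝ) from rfl, Matrix.map_mul]

lemma vecMul3 {α : Type*} [CommRing α] (v : Fin 3 → α) (M : Matrix (Fin 3) (Fin 3) α)
    (j : Fin 3) : Matrix.vecMul v M j = v 0 * M 0 j + v 1 * M 1 j + v 2 * M 2 j := by
  simp [Matrix.vecMul, dotProduct, Fin.sum_univ_three]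

lemma vecMul_cast (v : Fin 3 → ℤ) (M : Matrix (Fin 3) (Fin 3) ℤ) :
    Matrix.vecMul (fun i => (v i : ℝ)) (M.map fun z : ℤ => (z : ℝ))
      = fun j => ((Matrix.vecMul v M j : ℤ) : ℝ) := by
  funext j
  rw [vecMul3, vecMul3]
  simp [Matrix.map_apply]

lemma Bmat_entries (K : ℕ) :
    Bmat K 0 0 = 0 ∧ Bmat K 1 0 = 1 ∧ Bmat K 2 0 = 0 ∧
    Bmat K 0 1 = (K : ℤ) ∧ Bmat K 1 1 = 0 ∧ Bmat K 2 1 = 1 ∧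
    Bmat K 0 2 = (K : ℤ) - 1 ∧ Bmat K 1 2 = 0 ∧ Bmat K 2 2 = 1 := by
  refine ⟨?_, ?_, ?_, ?_, ?_, ?_, ?_, ?_, ?_⟩ <;> simp [Bmat]

lemma Amat_entries (K : ℕ) :
    Amat K 0 0 = 0 ∧ Amat K 1 0 = 1 ∧ Amat K 2 0 = 0 ∧
    Amat K 0 1 = (K : ℝ) ∧ Amat K 1 1 = 0 ∧ Amat K 2 1 = 1 ∧
    Amat K 0 2 = (K : ℝ) - 1 ∧ Amat K 1 2 = 0 ∧ Amat K 2 2 = 1 := by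
  refine ⟨?_, ?_, ?_, ?_, ?_, ?_, ?_, ?_, ?_⟩ <;> simp [Amat]

lemma vecMul_xi_Aprod (hpos : ∀ i, 1 ≤ i → 1 ≤ k i) (n : ℕ) :
    Matrix.vecMul (fun _ => ξ) (Aprod k n) = fun b => ξ * (lvec k n b : ℝ) := by
  induction n with
  | zero =>
    rw [Aprod_zero, Matrix.vecMul_one]
    funext b
    have : lvec k 0 b = 1 := by simp [lvec, compApply]
    rw [this]
    simp
  | succ n ih =>
    rw [Aprod_succ, ← Matrix.vecMul_vecMul, ih]
    funext b
    obtain ⟨e1, e2, e3, e4, e5, e6, e7, e8, e9⟩ := Amat_entries (k (n + 1))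
    have hb : b = 0 ∨ b = 1 ∨ b = 2 := by omega
    have hk1 : 1 ≤ k (n + 1) := hpos (n + 1) (by omega)
    rcases hb with rfl | rfl | rfl
    · rw [vecMul3, e1, e2, e3, lvec_zero_succ]
      ring
    · rw [vecMul3, e4, e5, e6, lvec_one_succ]
      push_cast
      ring
    · rw [vecMul3, e7, e8, e9, lvec_two_succ]
      push_cast [Nat.cast_sub hk1]
      ring

lemma round_eq_int {x : ℝ} {m : ℤ} (h : |x - (m : ℝ)| < 1 / 2) : round x = m := by
  have h2 := abs_lt.1 h
  have h0 : round (x - (m : ℝ)) = 0 :=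
    round_eq_zero_iff.2 ⟨by linarith [h2.1], by linarith [h2.2]⟩
  have h3 := round_add_intCast (x - (m : ℝ)) m
  rw [sub_add_cancel, h0, zero_add] at h3
  exact h3
end Endgame
section Final
variable (k : ℕ → ℕ) (ρ : ℕ → Fin 3) (ξ : ℝ) (f : (ℕ → Fin 3) → ℂ)

/-- nearest-integer vector -/
noncomputable def zvec (n : ℕ) (b : Fin 3) : ℤ := round (ξ * (lvec k n b : ℝ))

variable (hpos : ∀ i, 1 ≤ i → 1 ≤ k i) (hstar : StarCond k)
  (hρ : ∀ n : ℕ, IsPrefixSeq (compApply k n [2]) ρ)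
  (hf : ContinuousOn f (orbitClosure ρ))
  (hx : ∃ x ∈ orbitClosure ρ, f x ≠ 0)
  (heig : ∀ x ∈ orbitClosure ρ, f (shift x) = cEig ξ * f x)

include hpos hstar hρ hf hx heig

lemma zvec_coherent : ∀ᶠ n in atTop, ∀ b : Fin 3,
    zvec k ξ (n + 1) b = Matrix.vecMul (zvec k ξ n) (Bmat (k (n + 1))) b := by
  have he0 := eps_zero k ρ ξ f hpos hstar hρ hf hx heig
  have he1 := eps_one k ρ ξ f hpos hstar hρ hf hx heig
  have he2 := eps_two k ρ ξ f hpos hstar hρ hf hx heig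
  have heK := eps_kmul k ρ ξ f hpos hstar hρ hf hx heig
  have hc2 : Tendsto (fun n => (k (n + 1) : ℝ) * epsv k ξ n 0 + epsv k ξ n 2)
      atTop (𝓝 0) := by simpa using heK.add he2
  have hc3 : Tendsto (fun n => ((k (n + 1) : ℝ) - 1) * epsv k ξ n 0 + epsv k ξ n 2)
      atTop (𝓝 0) := by
    have := hc2.sub he0
    rw [sub_zero] at this
    refine this.congr fun n => ?_
    ring
  have E1 := (NormedAddCommGroup.tendsto_nhds_zero.1 he1) (1 / 2) (by norm_num)
  have E2 := (NormedAddCommGroup.tendsto_nhds_zero.1 hc2) (1 / 2) (by norm_num)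
  have E3 := (NormedAddCommGroup.tendsto_nhds_zero.1 hc3) (1 / 2) (by norm_num)
  filter_upwards [E1, E2, E3] with n h1 h2 h3
  rw [Real.norm_eq_abs] at h1 h2 h3
  obtain ⟨b1, b2, b3, b4, b5, b6, b7, b8, b9⟩ := Bmat_entries (k (n + 1))
  have hk1 : 1 ≤ k (n + 1) := hpos _ (by omega)
  intro b
  have hb : b = 0 ∨ b = 1 ∨ b = 2 := by omega
  rcases hb with rfl | rfl | rfl
  · rw [vecMul3, b1, b2, b3]
    show round (ξ * (lvec k (n + 1) 0 : ℝ)) = _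
    rw [lvec_zero_succ]
    show zvec k ξ n 1 = _
    ring
  · rw [vecMul3, b4, b5, b6]
    show round (ξ * (lvec k (n + 1) 1 : ℝ)) = _
    have hdiff : |ξ * (lvec k (n + 1) 1 : ℝ)
        - ((zvec k ξ n 0 * (k (n + 1) : ℤ) + zvec k ξ n 1 * 0 + zvec k ξ n 2 * 1 : ℤ) : ℝ)|
        < 1 / 2 := by
      have heq : ξ * (lvec k (n + 1) 1 : ℝ)
          - ((zvec k ξ n 0 * (k (n + 1) : ℤ) + zvec k ξ n 1 * 0 + zvec k ξ n 2 * 1 : ℤ) : ℝ)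
          = (k (n + 1) : ℝ) * epsv k ξ n 0 + epsv k ξ n 2 := by
        rw [lvec_one_succ]
        simp only [epsv, zvec]
        push_cast
        ring
      rw [heq]
      exact h2
    exact round_eq_int hdiff
  · rw [vecMul3, b7, b8, b9]
    show round (ξ * (lvec k (n + 1) 2 : ℝ)) = _
    have hdiff : |ξ * (lvec k (n + 1) 2 : ℝ)
        - ((zvec k ξ n 0 * ((k (n + 1) : ℤ) - 1) + zvec k ξ n 1 * 0 + zvec k ξ n 2 * 1 : ℤ) : ℝ)|
        < 1 / 2 := by
      have heq : ξ * (lvec k (n + 1) 2 : ℝ)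
          - ((zvec k ξ n 0 * ((k (n + 1) : ℤ) - 1) + zvec k ξ n 1 * 0 + zvec k ξ n 2 * 1 : ℤ) : ℝ)
          = ((k (n + 1) : ℝ) - 1) * epsv k ξ n 0 + epsv k ξ n 2 := by
        rw [lvec_two_succ]
        simp only [epsv, zvec]
        push_cast [Nat.cast_sub hk1]
        ring
      rw [heq]
      exact h3
    exact round_eq_int hdiff

lemma in_stable : InStableMod1 k ξ := by
  classical
  have he0 := eps_zero k ρ ξ f hpos hstar hρ hf hx heig
  have he1 := eps_one k ρ ξ f hpos hstar hρ hf hx heig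
  have he2 := eps_two k ρ ξ f hpos hstar hρ hf hx heig
  obtain ⟨N, hN⟩ := eventually_atTop.1
    (zvec_coherent k ρ ξ f hpos hstar hρ hf hx heig)
  set zi : Fin 3 → ℤ := Matrix.vecMul (zvec k ξ N) (Bprod k N)⁻¹ with hzi
  have hziprod : ∀ n, N ≤ n → Matrix.vecMul zi (Bprod k n) = zvec k ξ n := by
    intro n hn
    induction n, hn using Nat.le_induction with
    | base =>
      rw [hzi, Matrix.vecMul_vecMul, Matrix.nonsing_inv_mul _ (isUnit_det_Bprod k N),
        Matrix.vecMul_one]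
    | succ n hn ih =>
      rw [Bprod_succ, ← Matrix.vecMul_vecMul, ih]
      funext b
      exact (hN n hn b).symm
  refine ⟨zi, ?_⟩
  have hmain : ∀ n, N ≤ n → (Matrix.vecMul (fun i => ξ - (zi i : ℝ)) (Aprod k n))
      = fun b => epsv k ξ n b := by
    intro n hn
    have hsplit : (fun i => ξ - (zi i : ℝ)) = (fun _ => ξ) - (fun i => (zi i : ℝ)) := rfl
    rw [hsplit, Matrix.sub_vecMul, vecMul_xi_Aprod k ξ hpos n, Aprod_eq_map,
      vecMul_cast, hziprod n hn]
    funext b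
    simp only [Pi.sub_apply, epsv, zvec]
  have hT : Tendsto (fun n => (fun b => epsv k ξ n b)) atTop (𝓝 0) := by
    rw [tendsto_pi_nhds]
    intro b
    have hb : b = 0 ∨ b = 1 ∨ b = 2 := by omega
    rcases hb with rfl | rfl | rfl
    · simpa using he0
    · simpa using he1
    · simpa using he2
  refine hT.congr' ?_
  filter_upwards [eventually_ge_atTop N] with n hn
  exact (hmain n hn).symm
end Final

/-- if `(ξ,ξ,ξ)` does not belong to the stable space `W^s(0) mod 1`
for `ξ ∈ (0,1)`, then `e^{2πiξ}` is not a continuous eigenvalue of `(X,σ)`. -/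
theorem statement12 (k : ℕ → ℕ) (hpos : ∀ i, 1 ≤ i → 1 ≤ k i) (hstar : StarCond k)
    (ξ : ℝ) (hξ : ξ ∈ Set.Ioo (0 : ℝ) 1) (hns : ¬ InStableMod1 k ξ)
    (ρ : ℕ → Fin 3) (hρ : ∀ n : ℕ, IsPrefixSeq (compApply k n [2]) ρ) :
    ¬ IsCtsEigenvalue (orbitClosure ρ)
        (Complex.exp (2 * Real.pi * Complex.I * (ξ : ℂ))) := by
  rintro ⟨f, hf, hx, heig⟩
  exact hns (in_stable k ρ ξ f hpos hstar hρ hf hx heig)
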